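/- Consider any play of the graph game on (G, C, s, R), and define a Boolean assignment σ by setting σ(x_l) = true if the move of the play that traverses the variable component G(x_l) uses the path through c_l and f_l, and σ(x_l) = false if it uses the path through b_l and e_l. Then after the first n moves of the play the current edge set E satisfies, for every l ∈ {1,…,n}: (b_l,e_l) ∈ E if and only if σ(x_l) = true, and (c_l,f_l) ∈ E if and only if σ(x_l) = false. -/

import Mathlib

namespace PhutballQBF

/-- A literal: a variable `xₗ` (`pos l`) or its negation `¬xₗ` (`neg l`). -/
inductive Lit where
  | pos (l : ℕ)
  | neg (l : ℕ)
deriving DecidableEq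

/-- The index of the variable occurring in a literal. -/
def Lit.var : Lit → ℕ
  | .pos l => l
  | .neg l => l

/-- Evaluation of a literal under a Boolean assignment. -/
def Lit.eval (σ : ℕ → Bool) : Lit → Bool
  | .pos l => σ l
  | .neg l => !(σ l)

/-- Well-formedness of the 3CNF `F = F₁ ∧ ⋯ ∧ F_m`: the literal `l_{i,j}` (for
`1 ≤ i ≤ m`, `1 ≤ j ≤ 3`) mentions one of the variables `x₁, …, xₙ`. -/
def LitWF (n m : ℕ) (lit : ℕ → ℕ → Lit) : Prop :=
  ∀ i j, 1 ≤ i → i ≤ m → 1 ≤ j → j ≤ 3 → 1 ≤ (lit i j).var ∧ (lit i j).var ≤ n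

/-- The clause `Fᵢ = (l_{i,1} ∨ l_{i,2} ∨ l_{i,3})` evaluates to true under `σ`. -/
def ClauseTrue (lit : ℕ → ℕ → Lit) (i : ℕ) (σ : ℕ → Bool) : Prop :=
  ∃ j, 1 ≤ j ∧ j ≤ 3 ∧ (lit i j).eval σ = true

/-- The 3CNF formula `F = F₁ ∧ ⋯ ∧ F_m` evaluates to true under `σ`. -/
def FTrue (lit : ℕ → ℕ → Lit) (m : ℕ) (σ : ℕ → Bool) : Prop :=
  ∀ i, 1 ≤ i → i ≤ m → ClauseTrue lit i σ

/-- `QAux P i k σ`: the quantified statement with `k` variables `x_i, …, x_{i+k-1}`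
still to be quantified (existentially when the index is odd, universally when even),
the remaining variables having the values recorded in `σ`. -/
def QAux (P : (ℕ → Bool) → Prop) : ℕ → ℕ → (ℕ → Bool) → Prop
  | _, 0, σ => P σ
  | i, k + 1, σ =>
      if i % 2 = 1 then ∃ b, QAux P (i + 1) k (Function.update σ i b)
      else ∀ b, QAux P (i + 1) k (Function.update σ i b)

/-- Truth of the restricted quantified Boolean formula
`Q = ∃x₁ ∀x₂ ∃x₃ ⋯ ∀xₙ F(x₁, …, xₙ)`. -/
def QTrue (n m : ℕ) (lit : ℕ → ℕ → Lit) : Prop :=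
  QAux (FTrue lit m) 1 n (fun _ => false)

/-- The vertices of the graph `G` built from `Q` (with natural-number indices;
`g 0` is the extra vertex `g₀`). -/
inductive Vtx where
  | a (i : ℕ) | b (i : ℕ) | c (i : ℕ) | d (i : ℕ) | e (i : ℕ) | f (i : ℕ) | g (i : ℕ)
  | x (i : ℕ) | y (i : ℕ) | z (i : ℕ) | w (i : ℕ) (j : ℕ)
deriving DecidableEq

/-- A directed edge. -/
abbrev Edge := Vtx × Vtx

/-- The edge set `E(G)` of the graph `G` constructed from `Q` (with `n` variables and
`m` clauses): the variable components `G(xᵢ)`, the connecting edges `(gᵢ, aᵢ₊₁)` for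
`i = 0, …, n-1`, the edge `(gₙ, x₁)`, and the formula component `G(F)`. -/
def EG (n m : ℕ) : Set Edge :=
  { p | (∃ i, 1 ≤ i ∧ i ≤ n ∧
          (p = (Vtx.a i, Vtx.b i) ∨ p = (Vtx.a i, Vtx.c i) ∨ p = (Vtx.b i, Vtx.e i) ∨
           p = (Vtx.c i, Vtx.f i) ∨ p = (Vtx.e i, Vtx.d i) ∨ p = (Vtx.f i, Vtx.d i) ∨
           p = (Vtx.d i, Vtx.g i))) ∨
        (∃ i, i ≤ n - 1 ∧ p = (Vtx.g i, Vtx.a (i + 1))) ∨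
        p = (Vtx.g n, Vtx.x 1) ∨
        (∃ i, 1 ≤ i ∧ i ≤ m ∧
          (p = (Vtx.x i, Vtx.y i) ∨ p = (Vtx.y i, Vtx.z i) ∨ p = (Vtx.z i, Vtx.w i 1) ∨
           p = (Vtx.w i 1, Vtx.w i 2) ∨ p = (Vtx.w i 2, Vtx.w i 3))) ∨
        (∃ i, 1 ≤ i ∧ i ≤ m - 1 ∧ p = (Vtx.x i, Vtx.x (i + 1))) }

/-- The set `C = {g₀, g₁, …, g_{n-1}} ∪ {z₁, …, z_m}`. -/
def Cset (n m : ℕ) : Set Vtx :=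
  { v | (∃ i, i ≤ n - 1 ∧ v = Vtx.g i) ∨ (∃ i, 1 ≤ i ∧ i ≤ m ∧ v = Vtx.z i) }

/-- The relation `R ⊆ V(G) × E(G)`: `(w_{i,j}, (bₗ, eₗ)) ∈ R` iff `l_{i,j} = xₗ`, and
`(w_{i,j}, (cₗ, fₗ)) ∈ R` iff `l_{i,j} = ¬xₗ`. -/
def Rrel (lit : ℕ → ℕ → Lit) (m : ℕ) : Set (Vtx × Edge) :=
  { p | ∃ i j, 1 ≤ i ∧ i ≤ m ∧ 1 ≤ j ∧ j ≤ 3 ∧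
        ((∃ l, lit i j = Lit.pos l ∧ p = (Vtx.w i j, (Vtx.b l, Vtx.e l))) ∨
         (∃ l, lit i j = Lit.neg l ∧ p = (Vtx.w i j, (Vtx.c l, Vtx.f l)))) }

/-- `Rinv R E = R⁻¹(E)`: the vertices pointing some edge of `E`. -/
def Rinv (R : Set (Vtx × Edge)) (E : Set Edge) : Set Vtx :=
  { v | ∃ e ∈ E, (v, e) ∈ R }

/-- The set of (directed) edges traversed by a path given as its list of vertices. -/
def pathEdges (p : List Vtx) : Set Edge := { e | e ∈ p.zip p.tail }

/-- A legal move of the graph game from active vertex `u ∈ C` with current edge set `E`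
along the directed path `p` (a list of at least two pairwise distinct vertices whose
consecutive pairs are edges of `E`), ending at a vertex `v ∈ C ∪ R⁻¹(E)`, with all
internal vertices of `p` outside `C ∪ R⁻¹(E)`; the resulting edge set `E'` is obtained
by deleting the edges of `p` from `E`. -/
def LegalMoveVia (C : Set Vtx) (R : Set (Vtx × Edge))
    (u : Vtx) (E : Set Edge) (v : Vtx) (E' : Set Edge) (p : List Vtx) : Prop :=
  u ∈ C ∧ v ∈ C ∪ Rinv R E ∧
  2 ≤ p.length ∧ p.Nodup ∧
  p.head? = some u ∧ p.getLast? = some v ∧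
  List.Chain' (fun a b => (a, b) ∈ E) p ∧
  (∀ w ∈ (p.drop 1).dropLast, w ∉ C ∪ Rinv R E) ∧
  E' = E \ pathEdges p

/-- A legal move from `(u, E)` to `(v, E')` (along some path). -/
def LegalMove (C : Set Vtx) (R : Set (Vtx × Edge))
    (u : Vtx) (E : Set Edge) (v : Vtx) (E' : Set Edge) : Prop :=
  ∃ p, LegalMoveVia C R u E v E' p

/-- `MoverWins C R true u E` says that the player to move at the position with active
vertex `u` and current edge set `E` has a winning strategy; `MoverWins C R false u E`
says that the player to move loses whatever he does (in particular, if he has no legal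
move he loses immediately; a move to a vertex of `R⁻¹(E)` wins the game for the mover). -/
inductive MoverWins (C : Set Vtx) (R : Set (Vtx × Edge)) : Bool → Vtx → Set Edge → Prop
  | winsNow {u E v E'} : LegalMove C R u E v E' → v ∈ Rinv R E →
      MoverWins C R true u E
  | winsLater {u E v E'} : LegalMove C R u E v E' → MoverWins C R false v E' →
      MoverWins C R true u E
  | loses {u E} :
      (∀ v E', LegalMove C R u E v E' → v ∉ Rinv R E) →
      (∀ v E', LegalMove C R u E v E' → MoverWins C R true v E') →
      MoverWins C R false u E

/-- The two players of the graph game. -/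
inductive Player where
  | ex | fa
deriving DecidableEq

/-- The opponent of a player. -/
def Player.other : Player → Player
  | .ex => .fa
  | .fa => .ex

/-- A (maximal) play of the graph game on `(G, C, s, R)` starting from active vertex `s`
and edge set `E0`, with the ∃-player moving first.  `act k` and `edg k` are the active
vertex and edge set after `k` moves, `turn k` is the player who makes the `(k+1)`-st
move, and `len` is the total number of moves.  The play stops either because its last
move reached a vertex of `R⁻¹(E)` (the mover wins) or because the player to move has no
legal move (he loses); before that, no move may end in `R⁻¹(E)` without stopping. -/
structure Play (C : Set Vtx) (R : Set (Vtx × Edge)) (s : Vtx) (E0 : Set Edge) where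
  len : ℕ
  act : ℕ → Vtx
  edg : ℕ → Set Edge
  turn : ℕ → Player
  init_act : act 0 = s
  init_edg : edg 0 = E0
  init_turn : turn 0 = Player.ex
  turn_alt : ∀ k, turn (k + 1) = (turn k).other
  step : ∀ k, k < len → LegalMove C R (act k) (edg k) (act (k + 1)) (edg (k + 1))
  not_over : ∀ k, k + 1 < len → act (k + 1) ∉ Rinv R (edg k)
  maximal : (0 < len ∧ act len ∈ Rinv R (edg (len - 1))) ∨
            (∀ v E', ¬ LegalMove C R (act len) (edg len) v E')

/-! The only edge of `G` entering `bₗ` or `cₗ` comes from `aₗ`, and the only edge entering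
`aₗ` comes from `g_{l-1} ∈ C`. Since internal vertices of a move avoid `C`, a move deleting
`(bₗ, eₗ)` or `(cₗ, fₗ)` must start at `g_{l-1}`. The `l`-th move deletes one of these two
edges, so it starts at `g_{l-1}`; as the first `n` moves thus start at distinct vertices, the
`l`-th is the only one of them that can delete either edge, and the edge it leaves in place
survives. -/

theorem Set.mem_of_forall_notMem_diff {α : Type*} {S : ℕ → Set α} {a : α} {N : ℕ}
    (h0 : a ∈ S 0) (hstep : ∀ k < N, a ∉ S k \ S (k + 1)) : a ∈ S N := by
  induction N with
  | zero => exact h0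
  | succ N ih =>
    have ha : a ∈ S N := ih fun k hk => hstep k (by omega)
    by_contra ha'
    exact hstep N N.lt_succ_self ⟨ha, ha'⟩

namespace LegalMoveVia

variable {C : Set Vtx} {R : Set (Vtx × Edge)} {u v : Vtx} {E E' : Set Edge} {p : List Vtx}

theorem getElem_zero (h : LegalMoveVia C R u E v E' p) (hp : 0 < p.length) : p[0] = u := by
  obtain ⟨t, rfl⟩ := List.head?_eq_some_iff.mp h.2.2.2.2.1
  rfl

theorem getElem_pair_mem (h : LegalMoveVia C R u E v E' p) {i : ℕ} (hi : i + 1 < p.length) :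
    (p[i], p[i + 1]) ∈ E :=
  List.isChain_iff_getElem.mp h.2.2.2.2.2.2.1 i hi

theorem getElem_notMem (h : LegalMoveVia C R u E v E' p) {i : ℕ} (hi0 : 0 < i)
    (hi : i + 1 < p.length) : p[i] ∉ C := by
  have hmem : p[i] ∈ (p.drop 1).dropLast := by
    have heq : (p.drop 1).dropLast[i - 1]'(by simp; omega) = p[i] := by
      simp only [List.getElem_dropLast, List.getElem_drop]
      congr 1
      omega
    exact heq ▸ List.getElem_mem _
  exact fun hC => h.2.2.2.2.2.2.2.1 _ hmem (Or.inl hC)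

theorem fst_mem_of_mem_diff (h : LegalMoveVia C R u E v E' p) {x y : Vtx}
    (hxy : (x, y) ∈ E \ E') : x ∈ p := by
  have hpath : (x, y) ∈ pathEdges p := by
    by_contra hnot
    exact hxy.2 (h.2.2.2.2.2.2.2.2 ▸ ⟨hxy.1, hnot⟩)
  exact (List.of_mem_zip hpath).1

end LegalMoveVia

theorem EG.eq_a_of_mem_b {n m l : ℕ} {q : Vtx} (h : (q, Vtx.b l) ∈ EG n m) : q = Vtx.a l := by
  simp only [EG, Set.mem_ofPred_eq, Prod.mk.injEq] at h
  rcases h with ⟨i,_,_,h|h|h|h|h|h|h⟩|⟨i,_,h⟩|h|⟨i,_,_,h|h|h|h|h⟩|⟨i,_,_,h⟩ <;> simp_all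

theorem EG.eq_a_of_mem_c {n m l : ℕ} {q : Vtx} (h : (q, Vtx.c l) ∈ EG n m) : q = Vtx.a l := by
  simp only [EG, Set.mem_ofPred_eq, Prod.mk.injEq] at h
  rcases h with ⟨i,_,_,h|h|h|h|h|h|h⟩|⟨i,_,h⟩|h|⟨i,_,_,h|h|h|h|h⟩|⟨i,_,_,h⟩ <;> simp_all

theorem EG.eq_g_of_mem_a {n m l : ℕ} {q : Vtx} (h : (q, Vtx.a l) ∈ EG n m) :
    q = Vtx.g (l - 1) ∧ q ∈ Cset n m := by
  simp only [EG, Set.mem_ofPred_eq, Prod.mk.injEq] at h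
  rcases h with ⟨i,_,_,h|h|h|h|h|h|h⟩|⟨i,hi,h⟩|h|⟨i,_,_,h|h|h|h|h⟩|⟨i,_,_,h⟩ <;> simp_all
  exact Or.inl ⟨i, hi, rfl⟩

section Reduction

variable {n m l : ℕ} {R : Set (Vtx × Edge)} {u v : Vtx} {E E' : Set Edge} {p : List Vtx}

theorem LegalMoveVia.eq_g_of_getElem_eq_a (h : LegalMoveVia (Cset n m) R u E v E' p)
    (hE : E ⊆ EG n m) {i : ℕ} (hi : i < p.length) (hpi : p[i] = Vtx.a l) : u = Vtx.g (l - 1) := by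
  have ha : Vtx.a l ∉ Cset n m := by simp [Cset]
  obtain _ | j := i
  · exact absurd (hpi ▸ h.getElem_zero hi ▸ h.1) ha
  · obtain ⟨hpj, hgC⟩ := EG.eq_g_of_mem_a (hpi ▸ hE (h.getElem_pair_mem hi))
    obtain _ | j := j
    · rw [← h.getElem_zero (by omega), hpj]
    · exact absurd hgC (h.getElem_notMem (i := j + 1) (by omega) (by omega))

theorem LegalMoveVia.eq_g_of_mem (h : LegalMoveVia (Cset n m) R u E v E' p)
    (hE : E ⊆ EG n m) {x : Vtx} (hx : ∀ q, (q, x) ∈ EG n m → q = Vtx.a l)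
    (hxC : x ∉ Cset n m) (hxp : x ∈ p) : u = Vtx.g (l - 1) := by
  obtain ⟨i, hi, rfl⟩ := List.getElem_of_mem hxp
  obtain _ | j := i
  · exact absurd (h.getElem_zero hi ▸ h.1) hxC
  · exact h.eq_g_of_getElem_eq_a hE (by omega) (hx _ (hE (h.getElem_pair_mem hi)))

theorem Play.edg_antitone {C : Set Vtx} {R : Set (Vtx × Edge)} {s : Vtx} {E0 : Set Edge}
    (P : Play C R s E0) {j k : ℕ} (hjk : j ≤ k) (hk : k ≤ P.len) : P.edg k ⊆ P.edg j := by
  induction hjk with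
  | refl => exact subset_rfl
  | @step k _ ih =>
    obtain ⟨p, hmv⟩ := P.step k (by omega)
    rw [hmv.2.2.2.2.2.2.2.2]
    exact Set.sdiff_subset.trans (ih (by omega))

variable {s : Vtx} (P : Play (Cset n m) R s (EG n m))

theorem Play.act_eq_g_of_mem_diff {k : ℕ} (hk : k < P.len) {x y : Vtx}
    (hx : ∀ q, (q, x) ∈ EG n m → q = Vtx.a l) (hxC : x ∉ Cset n m)
    (hxy : (x, y) ∈ P.edg k \ P.edg (k + 1)) : P.act k = Vtx.g (l - 1) := by
  obtain ⟨p, hmv⟩ := P.step k hk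
  have hE : P.edg k ⊆ EG n m := by
    simpa only [P.init_edg] using P.edg_antitone (Nat.zero_le k) hk.le
  exact hmv.eq_g_of_mem hE hx hxC (hmv.fst_mem_of_mem_diff hxy)

theorem Play.mem_edg_of_notMem_diff {N : ℕ} (hN : N ≤ P.len) (hl1 : 1 ≤ l)
    (hstart : ∀ k < N, P.act k = Vtx.g k) {x y : Vtx}
    (hx : ∀ q, (q, x) ∈ EG n m → q = Vtx.a l) (hxC : x ∉ Cset n m) (hxy : (x, y) ∈ EG n m)
    (hl : (x, y) ∉ P.edg (l - 1) \ P.edg l) : (x, y) ∈ P.edg N := by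
  refine Set.mem_of_forall_notMem_diff (by rwa [P.init_edg]) fun k hk hdel => ?_
  have hkl : k = l - 1 := by
    simpa [hstart k hk] using P.act_eq_g_of_mem_diff (by omega) hx hxC hdel
  exact hl (by rwa [hkl, Nat.sub_add_cancel hl1] at hdel)

end Reduction

theorem edge_set_after_first_n_moves_general
    (n m : ℕ)
    (lit : ℕ → ℕ → Lit)
    (P : Play (Cset n m) (Rrel lit m) (Vtx.g 0) (EG n m))
    (hlen : n ≤ P.len)
    (σ : ℕ → Bool)
    (hσ : ∀ l, 1 ≤ l → l ≤ n →
      (σ l = true ↔ (Vtx.c l, Vtx.f l) ∈ P.edg (l - 1) \ P.edg l) ∧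
      (σ l = false ↔ (Vtx.b l, Vtx.e l) ∈ P.edg (l - 1) \ P.edg l)) :
    ∀ l, 1 ≤ l → l ≤ n →
      ((Vtx.b l, Vtx.e l) ∈ P.edg n ↔ σ l = true) ∧
      ((Vtx.c l, Vtx.f l) ∈ P.edg n ↔ σ l = false) := by
  have hstart : ∀ k < n, P.act k = Vtx.g k := by
    intro k hk
    obtain ⟨hc, hb⟩ := hσ (k + 1) (by omega) hk
    cases hσk : σ (k + 1)
    · exact P.act_eq_g_of_mem_diff (by omega) (fun _ => EG.eq_a_of_mem_b) (by simp [Cset])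
        (hb.mp hσk)
    · exact P.act_eq_g_of_mem_diff (by omega) (fun _ => EG.eq_a_of_mem_c) (by simp [Cset])
        (hc.mp hσk)
  intro l hl1 hln
  have hgone : ∀ e ∈ P.edg (l - 1) \ P.edg l, e ∉ P.edg n :=
    fun e he hen => he.2 (P.edg_antitone hln hlen hen)
  have hbe := P.mem_edg_of_notMem_diff hlen hl1 hstart (y := Vtx.e l)
    (fun _ => EG.eq_a_of_mem_b) (by simp [Cset]) (Or.inl ⟨l, hl1, hln, by simp⟩)
  have hcf := P.mem_edg_of_notMem_diff hlen hl1 hstart (y := Vtx.f l)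
    (fun _ => EG.eq_a_of_mem_c) (by simp [Cset]) (Or.inl ⟨l, hl1, hln, by simp⟩)
  obtain ⟨hc, hb⟩ := hσ l hl1 hln
  cases hσl : σ l
  · simp only [hσl, Bool.false_eq_true, false_iff, true_iff] at hc hb
    exact ⟨iff_of_false (hgone _ hb) Bool.false_ne_true, iff_of_true (hcf hc) rfl⟩
  · simp only [hσl, Bool.true_eq_false, false_iff, true_iff] at hc hb
    exact ⟨iff_of_true (hbe hb) rfl, iff_of_false (hgone _ hc) (by decide)⟩

/-- Consider any play of the graph game on `(G, C, s, R)` (which has at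
least `n` moves, the first `n` of which traverse the variable components in order), and
define a Boolean assignment `σ` by setting `σ(xₗ) = true` if the `l`-th move — the move
of the play that traverses the variable component `G(xₗ)` — uses the path through `cₗ`
and `fₗ` (i.e., it deletes the edge `(cₗ, fₗ)`), and `σ(xₗ) = false` if it uses the path
through `bₗ` and `eₗ` (i.e., it deletes the edge `(bₗ, eₗ)`).  Then after the first `n`
moves of the play the current edge set `E = P.edg n` satisfies, for every
`l ∈ {1, …, n}`: `(bₗ, eₗ) ∈ E` if and only if `σ(xₗ) = true`, and `(cₗ, fₗ) ∈ E` if and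
only if `σ(xₗ) = false`. -/
theorem edge_set_after_first_n_moves
    (n m : ℕ) (hn : Even n) (hn2 : 2 ≤ n) (hm : 1 ≤ m)
    (lit : ℕ → ℕ → Lit) (hwf : LitWF n m lit)
    (P : Play (Cset n m) (Rrel lit m) (Vtx.g 0) (EG n m))
    (hlen : n ≤ P.len)
    (σ : ℕ → Bool)
    (hσ : ∀ l, 1 ≤ l → l ≤ n →
      (σ l = true ↔ (Vtx.c l, Vtx.f l) ∈ P.edg (l - 1) \ P.edg l) ∧
      (σ l = false ↔ (Vtx.b l, Vtx.e l) ∈ P.edg (l - 1) \ P.edg l)) :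
    ∀ l, 1 ≤ l → l ≤ n →
      ((Vtx.b l, Vtx.e l) ∈ P.edg n ↔ σ l = true) ∧
      ((Vtx.c l, Vtx.f l) ∈ P.edg n ↔ σ l = false) :=
  edge_set_after_first_n_moves_general n m lit P hlen σ hσ

end PhutballQBF
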